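/- Let a < 0 and let f : (−∞, 2) → [0, ∞) be a smooth function with f(t) = 0 for all t ≤ 1, f'''(t) > 0 for all t ∈ (1, 2), and f(t) → +∞ as t → 2⁻. Then the function g(t) := (a/2)t² + f(t) has exactly one critical point q in the interval (0, 2); moreover q ∈ (1, 2), g''(q) > 0 (so q is a nondegenerate local minimum), and g(q) < a/2 < 0. -/

import Mathlib

open Set
open scoped ContDiff

/-- For `a < 0` and a smooth `f : (−∞,2) → [0,∞)` vanishing on `(−∞,1]`,
with `f''' > 0` on `(1,2)` and `f(t) → +∞` as `t → 2⁻`, the function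
`g(t) = (a/2)t² + f(t)` has exactly one critical point `q` in `(0,2)`; moreover
`q ∈ (1,2)`, `g''(q) > 0`, and `g(q) < a/2 < 0`. -/
theorem capping_function_unique_min
    (a : ℝ) (ha : a < 0) (f : ℝ → ℝ)
    (hsmooth : ContDiffOn ℝ (⊤ : ℕ∞) f (Iio 2))
    (hnonneg : ∀ t < (2 : ℝ), 0 ≤ f t)
    (hzero : ∀ t ≤ (1 : ℝ), f t = 0)
    (hthird : ∀ t ∈ Ioo (1 : ℝ) 2, 0 < deriv (deriv (deriv f)) t)
    (hinfty : Filter.Tendsto f (nhdsWithin 2 (Iio 2)) Filter.atTop) :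
    ∃ q ∈ Ioo (0 : ℝ) 2,
      deriv (fun t => a / 2 * t ^ 2 + f t) q = 0 ∧
      (∀ q' ∈ Ioo (0 : ℝ) 2, deriv (fun t => a / 2 * t ^ 2 + f t) q' = 0 → q' = q) ∧
      q ∈ Ioo (1 : ℝ) 2 ∧
      0 < deriv (deriv (fun t => a / 2 * t ^ 2 + f t)) q ∧
      a / 2 * q ^ 2 + f q < a / 2 ∧ a / 2 < 0 := by
  have hU : IsOpen (Iio (2:ℝ)) := isOpen_Iio
  set g : ℝ → ℝ := fun t => a / 2 * t ^ 2 + f t with hg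
  set f1 := deriv f with hf1def
  set f2 := deriv f1 with hf2def
  set f3 := deriv f2 with hf3def
  -- smoothness of derivatives
  have hsm : ContDiffOn ℝ (∞:WithTop ℕ∞) f (Iio 2) := hsmooth.of_le (by simp)
  have hone : ((∞:WithTop ℕ∞) + 1 ≤ ∞) := by norm_num
  have hsm1 : ContDiffOn ℝ (∞:WithTop ℕ∞) f1 (Iio 2) := hsm.deriv_of_isOpen hU hone
  have hsm2 : ContDiffOn ℝ (∞:WithTop ℕ∞) f2 (Iio 2) := hsm1.deriv_of_isOpen hU hone
  have hdiff : ∀ t ∈ Iio (2:ℝ), DifferentiableAt ℝ f t := fun t ht =>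
    (hsm.contDiffAt (hU.mem_nhds ht)).differentiableAt (by norm_num)
  have hdiff1 : ∀ t ∈ Iio (2:ℝ), DifferentiableAt ℝ f1 t := fun t ht =>
    (hsm1.contDiffAt (hU.mem_nhds ht)).differentiableAt (by norm_num)
  have hcont1 : ContinuousOn f1 (Iio 2) := hsm1.continuousOn
  have hcont2 : ContinuousOn f2 (Iio 2) := hsm2.continuousOn
  -- f1 vanishes on (-∞, 1]
  have hf1lt : ∀ t < (1:ℝ), f1 t = 0 := by
    intro t ht
    have hev : f =ᶠ[nhds t] (fun _ => (0:ℝ)) := by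
      filter_upwards [Iio_mem_nhds ht] with s hs using hzero s (le_of_lt hs)
    rw [hf1def, hev.deriv_eq, deriv_const]
  have hf1one : f1 1 = 0 := by
    have hc : ContinuousAt f1 1 :=
      (hcont1.continuousAt (hU.mem_nhds (by norm_num : (1:ℝ) ∈ Iio 2)))
    have h1 : Filter.Tendsto f1 (nhdsWithin 1 (Iio 1)) (nhds (f1 1)) :=
      (hc.continuousWithinAt)
    have h2 : Filter.Tendsto f1 (nhdsWithin 1 (Iio 1)) (nhds 0) := by
      apply Filter.Tendsto.congr' _ tendsto_const_nhds
      filter_upwards [self_mem_nhdsWithin] with s hs using (hf1lt s hs).symm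
    exact tendsto_nhds_unique h1 h2
  have hf1le : ∀ t ≤ (1:ℝ), f1 t = 0 := by
    intro t ht
    rcases lt_or_eq_of_le ht with h | h
    · exact hf1lt t h
    · rw [h]; exact hf1one
  -- derivative of g
  have hgd : ∀ t ∈ Iio (2:ℝ), HasDerivAt g (a * t + f1 t) t := by
    intro t ht
    have h1 : HasDerivAt (fun t : ℝ => a / 2 * t ^ 2) (a * t) t := by
      have := (hasDerivAt_pow 2 t).const_mul (a / 2)
      refine this.congr_deriv ?_
      push_cast; ring
    exact h1.add ((hdiff t ht).hasDerivAt)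
  have hderivg : ∀ t ∈ Iio (2:ℝ), deriv g t = a * t + f1 t := fun t ht => (hgd t ht).deriv
  -- derivative of g' := fun t => a * t + f1 t
  set G : ℝ → ℝ := fun t => a * t + f1 t with hG
  have hGd : ∀ t ∈ Iio (2:ℝ), HasDerivAt G (a + f2 t) t := by
    intro t ht
    have h1 : HasDerivAt (fun t : ℝ => a * t) a t := by
      simpa using (hasDerivAt_id t).const_mul a
    exact h1.add ((hdiff1 t ht).hasDerivAt)
  have hGcont : ContinuousOn G (Iio 2) :=
    (continuous_const.mul continuous_id).continuousOn.add hcont1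
  have hG1 : G 1 = a := by simp [hG, hf1one]
  -- a + f2 strictly monotone on Ico 1 2
  have hmono : StrictMonoOn (fun t => a + f2 t) (Ico (1:ℝ) 2) := by
    have h2 : StrictMonoOn f2 (Ico (1:ℝ) 2) := by
      apply strictMonoOn_of_deriv_pos (convex_Ico 1 2)
        (hcont2.mono (Ico_subset_Iio_self))
      intro x hx
      rw [interior_Ico] at hx
      exact hthird x hx
    intro x hx y hy hxy
    exact add_lt_add_right (h2 hx hy hxy) a
  -- key MVT tool
  have hMVT : ∀ x y : ℝ, 1 ≤ x → x < y → y < 2 →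
      ∃ c ∈ Ioo x y, a + f2 c = (G y - G x) / (y - x) := by
    intro x y hx hxy hy2
    apply exists_hasDerivAt_eq_slope G (fun t => a + f2 t) hxy
    · exact hGcont.mono (fun s hs => lt_of_le_of_lt hs.2 hy2)
    · intro s hs
      exact hGd s (lt_trans hs.2 hy2)
  -- no point of Ioo 1 q (for G q = 0) has G ≥ 0, more generally:
  have hneg : ∀ q ∈ Ioo (1:ℝ) 2, G q = 0 → ∀ t ∈ Ioo (1:ℝ) q, G t < 0 := by
    intro q hq hGq t ht
    by_contra hc
    push_neg at hc
    obtain ⟨c1, hc1, he1⟩ := hMVT 1 t le_rfl ht.1 (lt_trans ht.2 hq.2)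
    obtain ⟨c2, hc2, he2⟩ := hMVT t q (le_of_lt ht.1) ht.2 hq.2
    have hp1 : 0 < a + f2 c1 := by
      rw [he1, hG1]
      apply div_pos (by linarith) (by linarith [ht.1])
    have hp2 : a + f2 c2 ≤ 0 := by
      rw [he2, hGq]
      apply div_nonpos_of_nonpos_of_nonneg (by linarith) (by linarith [ht.2])
    have : a + f2 c1 < a + f2 c2 := by
      apply hmono ⟨le_of_lt hc1.1, by linarith [hc1.2, ht.2, hq.2]⟩
        ⟨by linarith [hc2.1, ht.1], lt_trans hc2.2 hq.2⟩ (by linarith [hc1.2, hc2.1])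
    linarith
  -- uniqueness of zeros in (1,2)
  have huniq : ∀ q1 ∈ Ioo (1:ℝ) 2, ∀ q2 ∈ Ioo (1:ℝ) 2, G q1 = 0 → G q2 = 0 → q1 = q2 := by
    intro q1 hq1 q2 hq2 h1 h2
    by_contra hne
    rcases lt_or_gt_of_ne hne with h | h
    · have := hneg q2 hq2 h2 q1 ⟨hq1.1, h⟩; linarith
    · have := hneg q1 hq1 h1 q2 ⟨hq2.1, h⟩; linarith
  -- existence of s with G s > 0
  have hex : ∃ s ∈ Ioo (1:ℝ) 2, 0 < G s := by
    by_contra hc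
    push_neg at hc
    have hanti : AntitoneOn g (Ico (1:ℝ) 2) := by
      apply antitoneOn_of_deriv_nonpos (convex_Ico 1 2)
      · apply ContinuousOn.mono _ (Ico_subset_Iio_self)
        exact (continuous_const.mul (continuous_pow 2)).continuousOn.add hsm.continuousOn
      · intro x hx
        rw [interior_Ico] at hx
        exact ((hgd x (hx.2)).differentiableAt).differentiableWithinAt
      · intro x hx
        rw [interior_Ico] at hx
        rw [hderivg x (hx.2)]
        exact hc x hx
    have hg1 : g 1 = a / 2 := by simp [hg, hzero 1 le_rfl]
    have hbound : ∀ t ∈ Ico (1:ℝ) 2, f t ≤ a / 2 - 2 * a := by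
      intro t ht
      have h1 : g t ≤ g 1 := hanti (left_mem_Ico.2 (by norm_num)) ht ht.1
      rw [hg1] at h1
      have h1' : a / 2 * t ^ 2 + f t ≤ a / 2 := h1
      have ht2 : t ^ 2 ≤ 4 := by nlinarith [ht.1, ht.2]
      have h2 : a / 2 * 4 ≤ a / 2 * t ^ 2 := by nlinarith
      linarith
    have hev1 : ∀ᶠ t in nhdsWithin 2 (Iio 2), f t ≤ a / 2 - 2 * a := by
      filter_upwards [Ioo_mem_nhdsLT (by norm_num : (1:ℝ) < 2),
        self_mem_nhdsWithin] with t ht1 ht2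
      exact hbound t ⟨le_of_lt ht1.1, ht1.2⟩
    have hev2 : ∀ᶠ t in nhdsWithin 2 (Iio 2), a / 2 - 2 * a < f t :=
      hinfty.eventually_gt_atTop _
    have : ∃ t, f t ≤ a / 2 - 2 * a ∧ a / 2 - 2 * a < f t :=
      ((hev1.and hev2).exists)
    obtain ⟨t, h1, h2⟩ := this
    linarith
  obtain ⟨s, hs, hGs⟩ := hex
  -- find the zero q ∈ (1, s)
  have hivt : (0:ℝ) ∈ G '' Ioo 1 s := by
    apply intermediate_value_Ioo (le_of_lt hs.1)
      (hGcont.mono (fun x hx => lt_of_le_of_lt hx.2 hs.2))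
    rw [hG1]
    exact ⟨ha, hGs⟩
  obtain ⟨q, hq, hGq⟩ := hivt
  have hq12 : q ∈ Ioo (1:ℝ) 2 := ⟨hq.1, lt_trans hq.2 hs.2⟩
  have hq2 : q < 2 := hq12.2
  refine ⟨q, ⟨by linarith [hq12.1], hq2⟩, ?_, ?_, hq12, ?_, ?_, by linarith⟩
  · rw [hderivg q hq2]; exact hGq
  · -- uniqueness in (0,2)
    intro q' hq' hd
    rw [hderivg q' hq'.2] at hd
    have hq'1 : 1 < q' := by
      by_contra hle
      push_neg at hle
      rw [hf1le q' hle] at hd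
      nlinarith [hq'.1]
    exact huniq q' ⟨hq'1, hq'.2⟩ q hq12 hd hGq
  · -- second derivative positive
    have heq : deriv g =ᶠ[nhds q] G := by
      filter_upwards [hU.mem_nhds hq2] with t ht using hderivg t ht
    rw [heq.deriv_eq, (hGd q hq2).deriv]
    obtain ⟨c, hc, he⟩ := hMVT 1 q le_rfl hq12.1 hq2
    have hp : 0 < a + f2 c := by
      rw [he, hG1, hGq]
      apply div_pos (by linarith) (by linarith [hq12.1])
    have : a + f2 c < a + f2 q :=
      hmono ⟨le_of_lt hc.1, lt_trans hc.2 hq2⟩ ⟨le_of_lt hq12.1, hq2⟩ hc.2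
    linarith
  · -- g q < a / 2
    have hanti : StrictAntiOn g (Icc (1:ℝ) q) := by
      apply strictAntiOn_of_deriv_neg (convex_Icc 1 q)
      · apply ContinuousOn.mono _ (fun x hx => lt_of_le_of_lt hx.2 hq2)
        exact (continuous_const.mul (continuous_pow 2)).continuousOn.add hsm.continuousOn
      · intro x hx
        rw [interior_Icc] at hx
        rw [hderivg x (lt_trans hx.2 hq2)]
        exact hneg q hq12 hGq x hx
    have h1 : g q < g 1 :=
      hanti (left_mem_Icc.2 (le_of_lt hq12.1)) (right_mem_Icc.2 (le_of_lt hq12.1)) hq12.1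
    have hg1 : g 1 = a / 2 := by simp [hg, hzero 1 le_rfl]
    rw [hg1] at h1
    exact h1
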